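/- arXiv:1704.07140 — 3 statements merged into one kernel-verified Lean document; each statement's English description precedes it below -/
import Mathlib

section
/- Let g : ℝ → ℝ be continuous, 2π-periodic with zero mean. Then for any T > 0 and any continuous function k : [0,T] → ℝ, sup_{t∈[0,T]} |∫₀^t k(s) g(ωs) ds| → 0 as ω → ∞. -/
open Real Set intervalIntegral

private lemma bdd_of_per {f : ℝ → ℝ} (hf : Continuous f)
    (hp : Function.Periodic f (2 * π)) :
    ∃ C : ℝ, 0 ≤ C ∧ ∀ x, |f x| ≤ C := by
  obtain ⟨C, hC⟩ := (isCompact_Icc (a := (0:ℝ)) (b := 2 * π)).exists_bound_of_continuousOn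
    hf.continuousOn
  refine ⟨max C 0, le_max_right _ _, fun x => ?_⟩
  obtain ⟨y, hy, hxy⟩ := hp.exists_mem_Ico₀ (by positivity) x
  rw [hxy]
  calc |f y| ≤ C := by simpa using hC y (Ico_subset_Icc_self hy)
    _ ≤ max C 0 := le_max_left _ _

theorem stmt2 (g : ℝ → ℝ) (hg : Continuous g) (hper : Function.Periodic g (2 * π))
    (hmean : ∫ s in (0:ℝ)..(2 * π), g s = 0)
    (T : ℝ) (hT : 0 < T) (k : ℝ → ℝ) (hk : ContinuousOn k (Icc 0 T)) :
    ∀ ε > 0, ∃ ω₀ : ℝ, ∀ ω ≥ ω₀, ∀ t ∈ Icc (0:ℝ) T,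
      |∫ s in (0:ℝ)..t, k s * g (ω * s)| < ε := by
  intro ε hε
  -- the primitive of g
  set G : ℝ → ℝ := fun x => ∫ s in (0:ℝ)..x, g s with hGdef
  have hgint : ∀ a b : ℝ, IntervalIntegrable g MeasureTheory.volume a b :=
    fun a b => hg.intervalIntegrable a b
  have hGc : Continuous G := intervalIntegral.continuous_primitive hgint 0
  have hG0 : G 0 = 0 := integral_same
  have hGper : Function.Periodic G (2 * π) := by
    intro x
    have h1 : (∫ s in (0:ℝ)..x, g s) + ∫ s in x..(x + 2 * π), g s
        = ∫ s in (0:ℝ)..(x + 2 * π), g s :=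
      integral_add_adjacent_intervals (hgint _ _) (hgint _ _)
    have h2 : (∫ s in x..(x + 2 * π), g s) = ∫ s in (0:ℝ)..(0 + 2 * π), g s :=
      hper.intervalIntegral_add_eq x 0
    have h3 : (∫ s in x..(x + 2 * π), g s) = 0 := by rw [h2, zero_add, hmean]
    simp only [hGdef]
    rw [← h1, h3, add_zero]
  have hGd : ∀ x : ℝ, HasDerivAt G (g x) x :=
    fun x => (hg.integral_hasStrictDerivAt 0 x).hasDerivAt
  -- bounds
  obtain ⟨Cg, hCg0, hCg⟩ := bdd_of_per hg hper
  obtain ⟨CG, hCG0, hCG⟩ := bdd_of_per hGc hGper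
  -- polynomial approximation
  have hε' : 0 < ε / (2 * (Cg * T + 1)) := by positivity
  obtain ⟨p, hp⟩ := exists_polynomial_near_of_continuousOn 0 T k hk _ hε'
  obtain ⟨Bp, hBp⟩ := (isCompact_Icc (a := (0:ℝ)) (b := T)).exists_bound_of_continuousOn
    (p.continuous_aeval.continuousOn (s := Icc 0 T))
  obtain ⟨Bp', hBp'⟩ := (isCompact_Icc (a := (0:ℝ)) (b := T)).exists_bound_of_continuousOn
    (p.derivative.continuous_aeval.continuousOn (s := Icc 0 T))
  have hBp0 : 0 ≤ Bp := le_trans (abs_nonneg _) (by simpa using hBp 0 ⟨le_refl _, hT.le⟩)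
  have hBp'0 : 0 ≤ Bp' := le_trans (abs_nonneg _) (by simpa using hBp' 0 ⟨le_refl _, hT.le⟩)
  set M : ℝ := Bp * CG + Bp' * CG * T with hMdef
  have hM0 : 0 ≤ M := by positivity
  refine ⟨max 1 (2 * (M + 1) / ε), fun ω hω t ht => ?_⟩
  have hω1 : (1:ℝ) ≤ ω := le_trans (le_max_left _ _) hω
  have hωpos : 0 < ω := lt_of_lt_of_le one_pos hω1
  have hω2 : 2 * (M + 1) / ε ≤ ω := le_trans (le_max_right _ _) hω
  obtain ⟨ht0, htT⟩ := ht
  have hsub : uIcc (0:ℝ) t ⊆ Icc 0 T := by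
    rw [uIcc_of_le ht0]; exact Icc_subset_Icc le_rfl htT
  -- integrability facts
  have hint1 : IntervalIntegrable (fun s => (k s - p.eval s) * g (ω * s))
      MeasureTheory.volume 0 t := by
    apply ContinuousOn.intervalIntegrable
    exact (((hk.mono hsub).sub p.continuous_aeval.continuousOn).mul
      ((hg.comp (continuous_const.mul continuous_id)).continuousOn))
  have hint2 : IntervalIntegrable (fun s => p.eval s * g (ω * s))
      MeasureTheory.volume 0 t :=
    ((p.continuous_aeval).mul (hg.comp (continuous_const.mul continuous_id))).intervalIntegrable _ _
  -- split the integral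
  have hsplit : (∫ s in (0:ℝ)..t, k s * g (ω * s))
      = (∫ s in (0:ℝ)..t, (k s - p.eval s) * g (ω * s))
        + ∫ s in (0:ℝ)..t, p.eval s * g (ω * s) := by
    rw [← integral_add hint1 hint2]
    congr 1; funext s; ring
  -- first piece
  have hbound1 : |∫ s in (0:ℝ)..t, (k s - p.eval s) * g (ω * s)|
      ≤ ε / (2 * (Cg * T + 1)) * Cg * T := by
    have H := intervalIntegral.norm_integral_le_of_norm_le_const
      (a := 0) (b := t) (C := ε / (2 * (Cg * T + 1)) * Cg)
      (f := fun s => (k s - p.eval s) * g (ω * s)) ?_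
    · rw [Real.norm_eq_abs] at H
      refine H.trans ?_
      have ht' : |t - 0| ≤ T := by rw [sub_zero, abs_of_nonneg ht0]; exact htT
      have h1 : 0 ≤ ε / (2 * (Cg * T + 1)) * Cg := by positivity
      nlinarith [abs_nonneg (t - 0)]
    · intro x hx
      have hxI : x ∈ Icc (0:ℝ) T := hsub (uIoc_subset_uIcc hx)
      rw [Real.norm_eq_abs, abs_mul]
      have h1 : |k x - p.eval x| ≤ ε / (2 * (Cg * T + 1)) := by
        rw [abs_sub_comm]; exact (hp x hxI).le
      exact mul_le_mul h1 (hCg _) (abs_nonneg _) hε'.le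
  -- second piece: integration by parts
  have hvd : ∀ s : ℝ, HasDerivAt (fun s => G (ω * s) / ω) (g (ω * s)) s := by
    intro s
    have h1 : HasDerivAt (fun s : ℝ => ω * s) ω s := by
      simpa using (hasDerivAt_id s).const_mul ω
    have h2 : HasDerivAt (fun s => G (ω * s)) (g (ω * s) * ω) s :=
      (hGd (ω * s)).comp s h1
    have h3 := h2.div_const ω
    simpa [mul_div_assoc, mul_div_cancel_right₀ _ hωpos.ne'] using h3
  have hparts : (∫ s in (0:ℝ)..t, p.eval s * g (ω * s))
      = p.eval t * (G (ω * t) / ω) - p.eval 0 * (G (ω * 0) / ω)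
        - ∫ s in (0:ℝ)..t, p.derivative.eval s * (G (ω * s) / ω) :=
    integral_mul_deriv_eq_deriv_mul
      (u := fun s => p.eval s) (u' := fun s => p.derivative.eval s)
      (v := fun s => G (ω * s) / ω) (v' := fun s => g (ω * s))
      (fun x _ => p.hasDerivAt x) (fun x _ => hvd x)
      (p.derivative.continuous_aeval.intervalIntegrable _ _)
      ((hg.comp (continuous_const.mul continuous_id)).intervalIntegrable _ _)
  have hbound2 : |∫ s in (0:ℝ)..t, p.eval s * g (ω * s)| ≤ M / ω := by
    rw [hparts]
    have hterm2 : p.eval 0 * (G (ω * 0) / ω) = 0 := by simp [hG0]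
    rw [hterm2, sub_zero]
    have hb1 : |p.eval t * (G (ω * t) / ω)| ≤ Bp * CG / ω := by
      rw [abs_mul, abs_div, abs_of_pos hωpos, mul_div_assoc]
      have h1 : |p.eval t| ≤ Bp := by simpa using hBp t ⟨ht0, htT⟩
      have h2 : |G (ω * t)| / ω ≤ CG / ω := by gcongr; exact hCG _
      exact mul_le_mul h1 h2 (by positivity) hBp0
    have hb3 : |∫ s in (0:ℝ)..t, p.derivative.eval s * (G (ω * s) / ω)|
        ≤ Bp' * CG / ω * T := by
      have H := intervalIntegral.norm_integral_le_of_norm_le_const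
        (a := 0) (b := t) (C := Bp' * CG / ω)
        (f := fun s => p.derivative.eval s * (G (ω * s) / ω)) ?_
      · rw [Real.norm_eq_abs] at H
        refine H.trans ?_
        have ht' : |t - 0| ≤ T := by rw [sub_zero, abs_of_nonneg ht0]; exact htT
        have h2 : 0 ≤ Bp' * CG / ω := by positivity
        nlinarith [abs_nonneg (t - 0)]
      · intro x hx
        rw [Real.norm_eq_abs, abs_mul, abs_div, abs_of_pos hωpos, mul_div_assoc]
        have hxI : x ∈ Icc (0:ℝ) T := hsub (uIoc_subset_uIcc hx)
        have h1 : |p.derivative.eval x| ≤ Bp' := by simpa using hBp' x hxI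
        have h2 : |G (ω * x)| / ω ≤ CG / ω := by gcongr; exact hCG _
        exact mul_le_mul h1 h2 (by positivity) hBp'0
    calc |p.eval t * (G (ω * t) / ω) - ∫ s in (0:ℝ)..t, p.derivative.eval s * (G (ω * s) / ω)|
        ≤ |p.eval t * (G (ω * t) / ω)|
          + |∫ s in (0:ℝ)..t, p.derivative.eval s * (G (ω * s) / ω)| := abs_sub _ _
      _ ≤ Bp * CG / ω + Bp' * CG / ω * T := add_le_add hb1 hb3
      _ = M / ω := by rw [hMdef]; field_simp
  -- conclude
  rw [hsplit]
  have h1 : ε / (2 * (Cg * T + 1)) * Cg * T < ε / 2 := by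
    rw [div_mul_eq_mul_div, div_mul_eq_mul_div, div_lt_div_iff₀ (by positivity) two_pos]
    nlinarith
  have h2 : M / ω < ε / 2 := by
    rw [div_lt_iff₀ hωpos]
    rw [div_le_iff₀ hε] at hω2
    nlinarith
  calc |(∫ s in (0:ℝ)..t, (k s - p.eval s) * g (ω * s))
        + ∫ s in (0:ℝ)..t, p.eval s * g (ω * s)|
      ≤ |∫ s in (0:ℝ)..t, (k s - p.eval s) * g (ω * s)|
        + |∫ s in (0:ℝ)..t, p.eval s * g (ω * s)| := abs_add_le _ _
    _ ≤ ε / (2 * (Cg * T + 1)) * Cg * T + M / ω := add_le_add hbound1 hbound2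
    _ < ε / 2 + ε / 2 := add_lt_add h1 h2
    _ = ε := by ring
end

section
/- Let r₁ : [0,T] × ℝ → ℝ be continuous, 2π-periodic in τ with zero mean in τ for each t, and uniformly continuous in t uniformly in τ. Then for each n ∈ ℕ, sup_{t∈[0,T]} |∫₀^t (sin(n(t−s))/n) r₁(s, ωs) ds| → 0 as ω → ∞. -/
open Real Set intervalIntegral

set_option maxHeartbeats 1000000

private lemma sin_lip (a b : ℝ) : |Real.sin a - Real.sin b| ≤ |a - b| := by
  rw [Real.sin_sub_sin]
  have h1 : |Real.sin ((a - b) / 2)| ≤ |(a - b) / 2| := Real.abs_sin_le_abs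
  have h2 : |Real.cos ((a + b) / 2)| ≤ 1 := Real.abs_cos_le_one _
  calc |2 * Real.sin ((a - b) / 2) * Real.cos ((a + b) / 2)|
      = 2 * |Real.sin ((a - b) / 2)| * |Real.cos ((a + b) / 2)| := by
        rw [abs_mul, abs_mul, abs_two]
    _ ≤ 2 * |(a - b) / 2| * 1 := by
        apply mul_le_mul _ h2 (abs_nonneg _) (by positivity)
        exact mul_le_mul_of_nonneg_left h1 (by norm_num)
    _ = |a - b| := by rw [abs_div, abs_two]; ring

theorem stmt3 (T : ℝ) (hT : 0 < T) (r₁ : ℝ → ℝ → ℝ)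
    (hcont : Continuous (Function.uncurry r₁))
    (hper : ∀ t τ, r₁ t (τ + 2 * π) = r₁ t τ)
    (hmean : ∀ t, ∫ τ in (0:ℝ)..(2 * π), r₁ t τ = 0)
    (hunif : ∀ ε > 0, ∃ δ > 0, ∀ t ∈ Icc (0:ℝ) T, ∀ t' ∈ Icc (0:ℝ) T,
      |t - t'| < δ → ∀ τ, |r₁ t τ - r₁ t' τ| < ε)
    (n : ℕ) (hn : 1 ≤ n) :
    ∀ ε > 0, ∃ ω₀ : ℝ, ∀ ω ≥ ω₀, ∀ t ∈ Icc (0:ℝ) T,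
      |∫ s in (0:ℝ)..t, Real.sin (n * (t - s)) / n * r₁ s (ω * s)| < ε := by
  -- bound on r₁
  have h2π : (0:ℝ) < 2 * π := Real.two_pi_pos
  have hcompact : IsCompact (Icc (0:ℝ) T ×ˢ Icc (0:ℝ) (2*π)) := isCompact_Icc.prod isCompact_Icc
  have hne : (Icc (0:ℝ) T ×ˢ Icc (0:ℝ) (2*π)).Nonempty :=
    ⟨((0:ℝ), (0:ℝ)), ⟨⟨le_refl _, hT.le⟩, ⟨le_refl _, h2π.le⟩⟩⟩
  obtain ⟨p₀, hp₀, hp₀max⟩ := hcompact.exists_isMaxOn hne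
    ((continuous_abs.comp hcont).continuousOn)
  set M : ℝ := |Function.uncurry r₁ p₀| + 1 with hMdef
  have hM1 : (1:ℝ) ≤ M := le_add_of_nonneg_left (abs_nonneg _)
  have hM0 : (0:ℝ) < M := lt_of_lt_of_le one_pos hM1
  have hbound : ∀ c ∈ Icc (0:ℝ) T, ∀ τ : ℝ, |r₁ c τ| ≤ M := by
    intro c hc τ
    have per : Function.Periodic (r₁ c) (2*π) := fun x => hper c x
    obtain ⟨y, hy, hyeq⟩ := per.exists_mem_Ico₀ h2π τ
    rw [hyeq]
    have h := hp₀max (show ((c, y) : ℝ × ℝ) ∈ Icc (0:ℝ) T ×ˢ Icc (0:ℝ) (2*π) from ⟨hc, ⟨hy.1, hy.2.le⟩⟩)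
    simp only [Function.comp_apply] at h
    calc |r₁ c y| = |Function.uncurry r₁ (c, y)| := rfl
      _ ≤ |Function.uncurry r₁ p₀| := h
      _ ≤ M := by rw [hMdef]; linarith
  have hcont_slice : ∀ c : ℝ, Continuous (r₁ c) := fun c =>
    hcont.comp (Continuous.prodMk_right c)
  have hint : ∀ c a b : ℝ, IntervalIntegrable (r₁ c) MeasureTheory.volume a b :=
    fun c a b => (hcont_slice c).intervalIntegrable a b
  -- bound on the primitive
  have hRbound : ∀ c ∈ Icc (0:ℝ) T, ∀ x : ℝ, |∫ u in (0:ℝ)..x, r₁ c u| ≤ 2*π*M := by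
    intro c hc x
    set R : ℝ → ℝ := fun x => ∫ u in (0:ℝ)..x, r₁ c u with hRdef
    have hRper : Function.Periodic R (2*π) := by
      intro z
      have h1 : (∫ u in (0:ℝ)..z, r₁ c u) + ∫ u in z..(z+2*π), r₁ c u
          = ∫ u in (0:ℝ)..(z+2*π), r₁ c u :=
        integral_add_adjacent_intervals (hint c 0 z) (hint c z (z+2*π))
      have h2 : (∫ u in z..(z+2*π), r₁ c u) = ∫ u in (0:ℝ)..((0:ℝ)+2*π), r₁ c u :=
        Function.Periodic.intervalIntegral_add_eq (fun y => hper c y) z 0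
      have h3 : (∫ u in (0:ℝ)..((0:ℝ)+2*π), r₁ c u) = 0 := by
        rw [zero_add]; exact hmean c
      have : R (z + 2*π) = R z := by
        simp only [hRdef]
        rw [← h1, h2, h3, add_zero]
      exact this
    obtain ⟨y, hy, hyeq⟩ := hRper.exists_mem_Ico₀ h2π x
    have hgoal : |R x| ≤ 2*π*M := by
      rw [hyeq]
      have hb : ‖∫ u in (0:ℝ)..y, r₁ c u‖ ≤ M * |y - 0| :=
        intervalIntegral.norm_integral_le_of_norm_le_const (fun u _ => by
          rw [Real.norm_eq_abs]; exact hbound c hc u)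
      rw [Real.norm_eq_abs] at hb
      have hy2 : |y - 0| ≤ 2*π := by
        rw [sub_zero, abs_of_nonneg hy.1]; exact hy.2.le
      calc |R y| ≤ M * |y - 0| := hb
        _ ≤ M * (2*π) := by nlinarith [abs_nonneg (y - 0)]
        _ = 2*π*M := by ring
    exact hgoal
  -- oscillation bound
  have hosc : ∀ ω : ℝ, 1 ≤ ω → ∀ c ∈ Icc (0:ℝ) T, ∀ a b : ℝ,
      |∫ s in a..b, r₁ c (ω*s)| ≤ 4*π*M/ω := by
    intro ω hω c hc a b
    have hω0 : (0:ℝ) < ω := lt_of_lt_of_le one_pos hω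
    rw [intervalIntegral.integral_comp_mul_left (fun u => r₁ c u) hω0.ne']
    rw [smul_eq_mul, abs_mul, abs_inv, abs_of_pos hω0]
    have h1 : (∫ u in (0:ℝ)..(ω*a), r₁ c u) + ∫ u in (ω*a)..(ω*b), r₁ c u
        = ∫ u in (0:ℝ)..(ω*b), r₁ c u :=
      integral_add_adjacent_intervals (hint c _ _) (hint c _ _)
    have hA := hRbound c hc (ω*a)
    have hB := hRbound c hc (ω*b)
    have h2 : |∫ u in (ω*a)..(ω*b), r₁ c u| ≤ 4*π*M := by
      have heq : (∫ u in (ω*a)..(ω*b), r₁ c u)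
          = (∫ u in (0:ℝ)..(ω*b), r₁ c u) - ∫ u in (0:ℝ)..(ω*a), r₁ c u := by linarith
      rw [heq, sub_eq_add_neg]
      calc |(∫ u in (0:ℝ)..(ω*b), r₁ c u) + -(∫ u in (0:ℝ)..(ω*a), r₁ c u)|
          ≤ |∫ u in (0:ℝ)..(ω*b), r₁ c u| + |-(∫ u in (0:ℝ)..(ω*a), r₁ c u)| := abs_add_le _ _
        _ ≤ 2*π*M + 2*π*M := by rw [abs_neg]; exact add_le_add hB hA
        _ = 4*π*M := by ring
    calc ω⁻¹ * |∫ u in (ω*a)..(ω*b), r₁ c u| ≤ ω⁻¹ * (4*π*M) :=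
          mul_le_mul_of_nonneg_left h2 (inv_nonneg.mpr hω0.le)
      _ = 4*π*M/ω := by rw [inv_mul_eq_div]
  -- main argument
  intro ε hε
  set ε' : ℝ := ε / (8 * (T + 1)) with hε'def
  have hε'pos : 0 < ε' := by positivity
  obtain ⟨δ, hδpos, hδ⟩ := hunif ε' hε'pos
  set h : ℝ := min (δ/2) (ε / (8 * (T + 1) * (M + 1))) with hhdef
  have hhpos : 0 < h := lt_min (by positivity) (by positivity)
  have hhδ : h < δ := lt_of_le_of_lt (min_le_left _ _) (by linarith)
  have hhM : h * M ≤ ε' := by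
    have h1 : h ≤ ε / (8 * (T + 1) * (M + 1)) := min_le_right _ _
    have h2 : h * M ≤ ε / (8 * (T + 1) * (M + 1)) * M :=
      mul_le_mul_of_nonneg_right h1 hM0.le
    have h3 : ε / (8 * (T + 1) * (M + 1)) * M ≤ ε / (8 * (T + 1)) := by
      rw [div_mul_eq_mul_div, div_le_div_iff₀ (by positivity) (by positivity)]
      nlinarith
    exact h2.trans h3
  refine ⟨max 1 (16 * π * M * T / (h * ε)), fun ω hω t ht => ?_⟩
  have hω1 : (1:ℝ) ≤ ω := le_trans (le_max_left _ _) hω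
  have hω0 : (0:ℝ) < ω := lt_of_lt_of_le one_pos hω1
  have hωbig : 16 * π * M * T / (h * ε) ≤ ω := le_trans (le_max_right _ _) hω
  obtain ⟨ht0, htT⟩ := ht
  set m : ℕ := ⌊t / h⌋₊ with hmdef
  have hmh : (m : ℝ) * h ≤ t := by
    have := Nat.floor_le (div_nonneg ht0 hhpos.le)
    calc (m:ℝ) * h ≤ t / h * h := mul_le_mul_of_nonneg_right this hhpos.le
      _ = t := div_mul_cancel₀ t hhpos.ne'
  have htmh : t - (m:ℝ) * h ≤ h := by
    have := Nat.lt_floor_add_one (t / h)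
    have h2 : t < ((m:ℝ) + 1) * h := by
      calc t = t / h * h := (div_mul_cancel₀ t hhpos.ne').symm
        _ < ((m:ℝ) + 1) * h := by
            apply mul_lt_mul_of_pos_right _ hhpos
            exact_mod_cast this
    nlinarith
  have hmT : (m : ℝ) * h ≤ T := hmh.trans htT
  have hmle : (m : ℝ) ≤ T / h := by
    rw [le_div_iff₀ hhpos]; exact hmT
  -- the integrand
  set f : ℝ → ℝ := fun s => Real.sin (↑n * (t - s)) / ↑n * r₁ s (ω * s) with hfdef
  have hn0 : (0:ℝ) < (n:ℝ) := by exact_mod_cast hn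
  have hninv : (1:ℝ)/(n:ℝ) ≤ 1 := by
    rw [div_le_one hn0]; exact_mod_cast hn
  have hcontf : Continuous f := by
    apply Continuous.mul
    · exact (Real.continuous_sin.comp (continuous_const.mul
        (continuous_const.sub continuous_id))).div_const _
    · exact hcont.comp (continuous_id.prodMk (continuous_const.mul continuous_id))
  have hintf : ∀ a b : ℝ, IntervalIntegrable f MeasureTheory.volume a b :=
    fun a b => hcontf.intervalIntegrable a b
  -- bound |sin(n(t-s))/n| ≤ 1
  have hKle : ∀ s : ℝ, |Real.sin (↑n * (t - s)) / ↑n| ≤ 1 := by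
    intro s
    rw [abs_div, abs_of_pos hn0, div_le_one hn0]
    calc |Real.sin (↑n * (t - s))| ≤ 1 := Real.abs_sin_le_one _
      _ ≤ (n:ℝ) := by exact_mod_cast hn
  -- pointwise bound for f on [0,T]
  have hfle : ∀ s ∈ Icc (0:ℝ) T, |f s| ≤ M := by
    intro s hs
    rw [hfdef]
    calc |Real.sin (↑n * (t - s)) / ↑n * r₁ s (ω * s)|
        = |Real.sin (↑n * (t - s)) / ↑n| * |r₁ s (ω * s)| := abs_mul _ _
      _ ≤ 1 * M := mul_le_mul (hKle s) (hbound s hs _) (abs_nonneg _) one_pos.le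
      _ = M := one_mul M
  -- split the integral
  have hsum : ∑ i ∈ Finset.range m, (∫ s in ((i:ℝ)*h)..(((i:ℝ)+1)*h), f s)
      = ∫ s in (0:ℝ)..((m:ℝ)*h), f s := by
    have := intervalIntegral.sum_integral_adjacent_intervals
      (a := fun i : ℕ => (i:ℝ)*h) (n := m) (μ := MeasureTheory.volume) (f := f)
      (fun k _ => hintf _ _)
    simpa [Nat.cast_succ] using this
  have hsplit : (∫ s in (0:ℝ)..t, f s)
      = (∫ s in (0:ℝ)..((m:ℝ)*h), f s) + ∫ s in ((m:ℝ)*h)..t, f s :=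
    (integral_add_adjacent_intervals (hintf _ _) (hintf _ _)).symm
  -- per-interval bound
  have hterm : ∀ i ∈ Finset.range m,
      |∫ s in ((i:ℝ)*h)..(((i:ℝ)+1)*h), f s| ≤ 4*π*M/ω + (h*M + ε') * h := by
    intro i hi
    have him : i < m := Finset.mem_range.mp hi
    have hi1m : ((i:ℝ)+1) ≤ (m:ℝ) := by exact_mod_cast Nat.succ_le_of_lt him
    have hihT : (i:ℝ)*h ∈ Icc (0:ℝ) T := by
      constructor
      · positivity
      · calc (i:ℝ)*h ≤ ((i:ℝ)+1)*h := by nlinarith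
          _ ≤ (m:ℝ)*h := mul_le_mul_of_nonneg_right hi1m hhpos.le
          _ ≤ T := hmT
    set g : ℝ → ℝ := fun s => Real.sin (↑n * (t - (i:ℝ)*h)) / ↑n * r₁ ((i:ℝ)*h) (ω * s)
      with hgdef
    have hcontg : Continuous g :=
      continuous_const.mul ((hcont_slice _).comp (continuous_const.mul continuous_id))
    have hintg : IntervalIntegrable g MeasureTheory.volume ((i:ℝ)*h) (((i:ℝ)+1)*h) :=
      hcontg.intervalIntegrable _ _
    have hsplit2 : (∫ s in ((i:ℝ)*h)..(((i:ℝ)+1)*h), f s)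
        = (∫ s in ((i:ℝ)*h)..(((i:ℝ)+1)*h), g s)
          + ∫ s in ((i:ℝ)*h)..(((i:ℝ)+1)*h), (f s - g s) := by
      rw [intervalIntegral.integral_sub (hintf _ _) hintg]; ring
    -- bound on the frozen integral
    have hg : |∫ s in ((i:ℝ)*h)..(((i:ℝ)+1)*h), g s| ≤ 4*π*M/ω := by
      rw [hgdef]
      rw [intervalIntegral.integral_const_mul, abs_mul]
      calc |Real.sin (↑n * (t - (i:ℝ)*h)) / ↑n|
            * |∫ s in ((i:ℝ)*h)..(((i:ℝ)+1)*h), r₁ ((i:ℝ)*h) (ω * s)|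
          ≤ 1 * (4*π*M/ω) := by
            apply mul_le_mul (hKle _) (hosc ω hω1 _ hihT _ _) (abs_nonneg _) one_pos.le
        _ = 4*π*M/ω := one_mul _
    -- bound on the error integral
    have herr : |∫ s in ((i:ℝ)*h)..(((i:ℝ)+1)*h), (f s - g s)| ≤ (h*M + ε') * h := by
      have hb : ‖∫ s in ((i:ℝ)*h)..(((i:ℝ)+1)*h), (f s - g s)‖
          ≤ (h*M + ε') * |((i:ℝ)+1)*h - (i:ℝ)*h| := by
        apply intervalIntegral.norm_integral_le_of_norm_le_const
        intro s hs
        rw [Set.uIoc_of_le (by nlinarith)] at hs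
        obtain ⟨hs1, hs2⟩ := hs
        have hsT : s ∈ Icc (0:ℝ) T := by
          constructor
          · have : (0:ℝ) ≤ (i:ℝ)*h := by positivity
            linarith
          · calc s ≤ ((i:ℝ)+1)*h := hs2
              _ ≤ (m:ℝ)*h := mul_le_mul_of_nonneg_right hi1m hhpos.le
              _ ≤ T := hmT
        have hsd : |s - (i:ℝ)*h| < δ := by
          rw [abs_of_nonneg (by linarith)]
          have : s - (i:ℝ)*h ≤ h := by nlinarith
          linarith
        rw [Real.norm_eq_abs]
        set A : ℝ := Real.sin (↑n * (t - s)) / ↑n with hA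
        set A' : ℝ := Real.sin (↑n * (t - (i:ℝ)*h)) / ↑n with hA'
        set B : ℝ := r₁ s (ω * s) with hB
        set B' : ℝ := r₁ ((i:ℝ)*h) (ω * s) with hB'
        have hAA' : |A - A'| ≤ h := by
          rw [hA, hA', div_sub_div_same, abs_div, abs_of_pos hn0, div_le_iff₀ hn0]
          calc |Real.sin (↑n * (t - s)) - Real.sin (↑n * (t - (i:ℝ)*h))|
              ≤ |↑n * (t - s) - ↑n * (t - (i:ℝ)*h)| := sin_lip _ _
            _ = (n:ℝ) * |s - (i:ℝ)*h| := by
                rw [show (n:ℝ) * (t - s) - (n:ℝ) * (t - (i:ℝ)*h) = (n:ℝ) * ((i:ℝ)*h - s) by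
                  ring, abs_mul, abs_of_pos hn0, abs_sub_comm]
            _ ≤ (n:ℝ) * h := by
                apply mul_le_mul_of_nonneg_left _ hn0.le
                rw [abs_of_nonneg (by linarith)]; nlinarith
            _ = h * (n:ℝ) := mul_comm _ _
        have hBB' : |B - B'| ≤ ε' := (hδ s hsT ((i:ℝ)*h) hihT hsd (ω*s)).le
        have hfg : f s - g s = (A - A') * B + A' * (B - B') := by
          rw [hfdef, hgdef]; simp only [hA, hA', hB, hB']; ring
        rw [hfg]
        calc |(A - A') * B + A' * (B - B')| ≤ |(A - A') * B| + |A' * (B - B')| := abs_add_le _ _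
          _ = |A - A'| * |B| + |A'| * |B - B'| := by rw [abs_mul, abs_mul]
          _ ≤ h * M + 1 * ε' := by
              apply add_le_add
              · exact mul_le_mul hAA' (hbound s hsT _) (abs_nonneg _) hhpos.le
              · exact mul_le_mul (hKle _) hBB' (abs_nonneg _) one_pos.le
          _ = h * M + ε' := by ring
      rw [Real.norm_eq_abs] at hb
      have : |((i:ℝ)+1)*h - (i:ℝ)*h| = h := by
        rw [show ((i:ℝ)+1)*h - (i:ℝ)*h = h by ring, abs_of_pos hhpos]
      rw [this] at hb
      exact hb
    rw [hsplit2]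
    calc |(∫ s in ((i:ℝ)*h)..(((i:ℝ)+1)*h), g s)
          + ∫ s in ((i:ℝ)*h)..(((i:ℝ)+1)*h), (f s - g s)|
        ≤ |∫ s in ((i:ℝ)*h)..(((i:ℝ)+1)*h), g s|
          + |∫ s in ((i:ℝ)*h)..(((i:ℝ)+1)*h), (f s - g s)| := abs_add_le _ _
      _ ≤ 4*π*M/ω + (h*M + ε') * h := add_le_add hg herr
  -- tail bound
  have htail : |∫ s in ((m:ℝ)*h)..t, f s| ≤ M * h := by
    have hb : ‖∫ s in ((m:ℝ)*h)..t, f s‖ ≤ M * |t - (m:ℝ)*h| := by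
      apply intervalIntegral.norm_integral_le_of_norm_le_const
      intro s hs
      rw [Set.uIoc_of_le hmh] at hs
      obtain ⟨hs1, hs2⟩ := hs
      rw [Real.norm_eq_abs]
      apply hfle
      constructor
      · have : (0:ℝ) ≤ (m:ℝ)*h := by positivity
        linarith
      · linarith
    rw [Real.norm_eq_abs] at hb
    calc |∫ s in ((m:ℝ)*h)..t, f s| ≤ M * |t - (m:ℝ)*h| := hb
      _ ≤ M * h := by
          apply mul_le_mul_of_nonneg_left _ hM0.le
          rw [abs_of_nonneg (by linarith)]; exact htmh
  -- collect
  have hmain : |∫ s in (0:ℝ)..t, f s|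
      ≤ (m:ℝ) * (4*π*M/ω + (h*M + ε') * h) + M * h := by
    rw [hsplit]
    calc |(∫ s in (0:ℝ)..((m:ℝ)*h), f s) + ∫ s in ((m:ℝ)*h)..t, f s|
        ≤ |∫ s in (0:ℝ)..((m:ℝ)*h), f s| + |∫ s in ((m:ℝ)*h)..t, f s| := abs_add_le _ _
      _ ≤ (m:ℝ) * (4*π*M/ω + (h*M + ε') * h) + M * h := by
          apply add_le_add _ htail
          rw [← hsum]
          calc |∑ i ∈ Finset.range m, (∫ s in ((i:ℝ)*h)..(((i:ℝ)+1)*h), f s)|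
              ≤ ∑ i ∈ Finset.range m, |∫ s in ((i:ℝ)*h)..(((i:ℝ)+1)*h), f s| :=
                Finset.abs_sum_le_sum_abs _ _
            _ ≤ ∑ _i ∈ Finset.range m, (4*π*M/ω + (h*M + ε') * h) :=
                Finset.sum_le_sum hterm
            _ = (m:ℝ) * (4*π*M/ω + (h*M + ε') * h) := by
                rw [Finset.sum_const, Finset.card_range, nsmul_eq_mul]
  -- numeric estimates
  have hπ0 : (0:ℝ) < π := Real.pi_pos
  have e1 : (m:ℝ) * (4*π*M/ω) ≤ ε/4 := by
    have h1 : (m:ℝ) * (4*π*M/ω) ≤ (T/h) * (4*π*M/ω) := by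
      apply mul_le_mul_of_nonneg_right hmle
      positivity
    have h2 : (T/h) * (4*π*M/ω) ≤ ε/4 := by
      rw [div_mul_div_comm, div_le_div_iff₀ (by positivity) (by norm_num)]
      -- T * (4πM) * 4 ≤ ε * (h * ω)
      have h3 : 16 * π * M * T ≤ ε * (h * ω) := by
        have := hωbig
        rw [div_le_iff₀ (by positivity)] at this
        nlinarith
      nlinarith
    exact h1.trans h2
  have e2 : (m:ℝ) * ((h*M + ε') * h) ≤ ε/4 := by
    have h1 : (m:ℝ) * h ≤ T := hmT
    have h2 : h*M + ε' ≤ 2*ε' := by linarith [hhM]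
    have h3 : (m:ℝ) * ((h*M + ε') * h) = ((m:ℝ)*h) * (h*M + ε') := by ring
    have h4 : ((m:ℝ)*h) * (h*M + ε') ≤ T * (2*ε') := by
      apply mul_le_mul h1 h2 (by positivity) hT.le
    have h5 : T * (2*ε') ≤ ε/4 := by
      rw [hε'def, show T * (2 * (ε / (8 * (T + 1)))) = (2*T*ε) / (8*(T+1)) by ring,
        div_le_div_iff₀ (by positivity) (by norm_num)]
      nlinarith
    rw [h3]
    exact h4.trans h5
  have e3 : M * h ≤ ε/8 := by
    have k1 : h * M ≤ ε' := hhM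
    have k2 : ε' ≤ ε/8 := by
      rw [hε'def, div_le_div_iff₀ (by positivity) (by norm_num)]
      nlinarith
    nlinarith
  calc |∫ s in (0:ℝ)..t, Real.sin (↑n * (t - s)) / ↑n * r₁ s (ω * s)|
      = |∫ s in (0:ℝ)..t, f s| := rfl
    _ ≤ (m:ℝ) * (4*π*M/ω + (h*M + ε') * h) + M * h := hmain
    _ = (m:ℝ) * (4*π*M/ω) + (m:ℝ) * ((h*M + ε') * h) + M * h := by ring
    _ ≤ ε/4 + ε/4 + ε/8 := by
        apply add_le_add (add_le_add e1 e2) e3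
    _ < ε := by linarith
end

section
/- Let f(x) = Σ_{n=1}^N fₙ sin(nx) and let r = r₀ + r₁ where r₀ : [0,T] → ℝ is continuous and r₁ : [0,T]×ℝ → ℝ is continuous, 2π-periodic in τ with zero mean in τ. Define u_ω(x,t) = Σₙ fₙ sin(nx)∫₀^t (sin(n(t−s))/n) r(s,ωs) ds and u₀(x,t) = Σₙ fₙ sin(nx)∫₀^t (sin(n(t−s))/n) r₀(s) ds. Then sup_{(x,t)∈[0,π]×[0,T]} |u_ω(x,t) − u₀(x,t)| → 0 as ω → ∞. -/
/-!
The fast variable averages out. On an `s`-interval of length below the modulus of uniform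
continuity, `r₁ s` stays uniformly close to the profile `r₁ a` at its left end, and since `r₁ a`
is periodic with mean zero, any integral of it is bounded by one period's worth; after the
substitution `τ = ω s` this makes `∫ r₁ a (ω s) ds = O(1/ω)`. Cutting `[0, t]` into finitely many
such pieces shows that `∫₀ᵗ q s * r₁ s (ω s) ds → 0` uniformly in `t` for continuous `q`.
Expanding `sin (n (t - s)) = sin (n t) cos (n s) - cos (n t) sin (n s)` reduces each of the
finitely many Fourier modes of `u_ω - u₀` to two such integrals.
-/

open Real Set intervalIntegral Filter Function Topology

namespace Function.Periodic

theorem apply_toIcoMod {α : Type*} {p : ℝ} {h : ℝ → α} (hp : 0 < p) (hper : Periodic h p)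
    (a x : ℝ) : h (toIcoMod hp a x) = h x := by
  rw [← self_sub_toIcoDiv_zsmul, hper.sub_zsmul_eq]

variable {E : Type*} [NormedAddCommGroup E] [NormedSpace ℝ E] {p : ℝ} {h : ℝ → E}

theorem norm_intervalIntegral_le_of_integral_eq_zero (hp : 0 < p) (hper : Periodic h p)
    (hint : ∀ a b, IntervalIntegrable h MeasureTheory.volume a b)
    (hmean : ∫ x in 0..p, h x = 0) {M : ℝ} (hM : ∀ x, ‖h x‖ ≤ M) (a b : ℝ) :
    ‖∫ x in a..b, h x‖ ≤ p * M := by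
  set c := toIcoMod hp a b
  have hc : c ∈ Ico a (a + p) := toIcoMod_mem_Ico hp a b
  have hwhole : ∫ x in c..b, h x = 0 := by
    rw [← toIcoMod_add_toIcoDiv_zsmul hp a b, hper.intervalIntegral_add_zsmul_eq _ _ hint,
      hper.intervalIntegral_add_eq _ 0, zero_add, hmean, smul_zero]
  rw [← integral_add_adjacent_intervals (hint a c) (hint c b), hwhole, add_zero]
  calc ‖∫ x in a..c, h x‖ ≤ M * |c - a| := norm_integral_le_of_norm_le_const fun x _ => hM x
    _ ≤ M * p := by
        gcongr
        · exact (norm_nonneg _).trans (hM 0)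
        · rw [abs_of_nonneg (by linarith [hc.1])]; linarith [hc.2]
    _ = p * M := mul_comm M p

theorem norm_intervalIntegral_comp_mul_le (hp : 0 < p) (hper : Periodic h p)
    (hint : ∀ a b, IntervalIntegrable h MeasureTheory.volume a b)
    (hmean : ∫ x in 0..p, h x = 0) {M : ℝ} (hM : ∀ x, ‖h x‖ ≤ M) {ω : ℝ} (hω : 0 < ω)
    (a b : ℝ) : ‖∫ s in a..b, h (ω * s)‖ ≤ p * M / ω := by
  rw [integral_comp_mul_left h hω.ne', norm_smul, norm_inv, Real.norm_of_nonneg hω.le,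
    inv_mul_eq_div]
  gcongr
  exact norm_intervalIntegral_le_of_integral_eq_zero hp hper hint hmean hM _ _

end Function.Periodic

section Averaging

variable {E : Type*} [NormedAddCommGroup E] {p : ℝ}

theorem IsCompact.exists_bound_of_periodic {α : Type*} [TopologicalSpace α] {K : Set α}
    {g : α → ℝ → E} (hK : IsCompact K) (hg : Continuous (uncurry g)) (hp : 0 < p)
    (hper : ∀ s, Periodic (g s) p) : ∃ M, ∀ s ∈ K, ∀ τ, ‖g s τ‖ ≤ M := by
  obtain ⟨M, hM⟩ := (hK.prod isCompact_Icc).exists_bound_of_continuousOn hg.continuousOn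
  refine ⟨M, fun s hs τ => ?_⟩
  rw [← (hper s).apply_toIcoMod hp 0 τ]
  exact hM (s, _) ⟨hs, Ico_subset_Icc_self (toIcoMod_mem_Ico' hp τ)⟩

theorem IsCompact.exists_forall_dist_lt_of_periodic {α β : Type*} [PseudoMetricSpace α]
    [PseudoMetricSpace β] {K : Set α} {g : α → ℝ → β} (hK : IsCompact K)
    (hg : Continuous (uncurry g)) (hp : 0 < p) (hper : ∀ s, Periodic (g s) p) {η : ℝ}
    (hη : 0 < η) :
    ∃ δ > 0, ∀ s ∈ K, ∀ a ∈ K, dist s a < δ → ∀ τ, dist (g s τ) (g a τ) < η := by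
  obtain ⟨δ, hδ, hclose⟩ := Metric.uniformContinuousOn_iff.mp
    ((hK.prod isCompact_Icc).uniformContinuousOn_of_continuous hg.continuousOn) η hη
  refine ⟨δ, hδ, fun s hs a ha hsa τ => ?_⟩
  have hτ := Ico_subset_Icc_self (toIcoMod_mem_Ico' hp τ)
  rw [← (hper s).apply_toIcoMod hp 0 τ, ← (hper a).apply_toIcoMod hp 0 τ]
  exact hclose (s, _) ⟨hs, hτ⟩ (a, _) ⟨ha, hτ⟩ (by simpa [Prod.dist_eq] using hsa)

variable [NormedSpace ℝ E] {g : ℝ → ℝ → E}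

theorem norm_intervalIntegral_comp_mul_le_of_near_periodic {a b ω η M : ℝ} (hab : a ≤ b)
    (hω : 0 < ω) (hp : 0 < p) (hg : Continuous (uncurry g)) (hper : Periodic (g a) p)
    (hmean : ∫ τ in 0..p, g a τ = 0) (hM : ∀ τ, ‖g a τ‖ ≤ M)
    (hclose : ∀ s ∈ Icc a b, ∀ τ, ‖g s τ - g a τ‖ ≤ η) :
    ‖∫ s in a..b, g s (ω * s)‖ ≤ η * (b - a) + p * M / ω := by
  have hga : Continuous (g a) := hg.comp (Continuous.prodMk_right a)
  have hgω : Continuous fun s => g s (ω * s) := hg.comp (continuous_id.prodMk (by fun_prop))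
  have hgaω : Continuous fun s => g a (ω * s) := hga.comp (by fun_prop)
  have hsplit : ∫ s in a..b, g s (ω * s)
      = (∫ s in a..b, (g s (ω * s) - g a (ω * s))) + ∫ s in a..b, g a (ω * s) := by
    rw [integral_sub (hgω.intervalIntegrable _ _) (hgaω.intervalIntegrable _ _), sub_add_cancel]
  have hnear : ‖∫ s in a..b, (g s (ω * s) - g a (ω * s))‖ ≤ η * (b - a) := by
    refine (norm_integral_le_of_norm_le_const fun s hs => ?_).trans_eq
      (by rw [abs_of_nonneg (sub_nonneg.mpr hab)])
    rw [uIoc_of_le hab] at hs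
    exact hclose s (Ioc_subset_Icc_self hs) _
  rw [hsplit]
  exact (norm_add_le _ _).trans (add_le_add hnear
    (hper.norm_intervalIntegral_comp_mul_le hp (fun _ _ => hga.intervalIntegrable _ _) hmean hM
      hω a b))

theorem tendstoUniformlyOn_integral_comp_mul_of_periodic (hp : 0 < p)
    (hg : Continuous (uncurry g)) (hper : ∀ s, Periodic (g s) p)
    (hmean : ∀ s, ∫ τ in 0..p, g s τ = 0) (T : ℝ) :
    TendstoUniformlyOn (fun ω t => ∫ s in 0..t, g s (ω * s)) 0 atTop (Icc 0 T) := by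
  rw [Metric.tendstoUniformlyOn_iff]
  intro ε hε
  obtain ⟨M, hM⟩ := (isCompact_Icc (a := 0) (b := T)).exists_bound_of_periodic hg hp hper
  set L := max T 1
  have hL : 0 < L := lt_max_of_lt_right one_pos
  set η := ε / (2 * L)
  obtain ⟨δ, hδ, hclose⟩ :=
    (isCompact_Icc (a := 0) (b := T)).exists_forall_dist_lt_of_periodic hg hp hper
      (show 0 < η by positivity)
  obtain ⟨m, hm⟩ := exists_nat_gt (L / δ)
  have hm0 : (0 : ℝ) < m := (div_pos hL hδ).trans hm
  have hsmall : Tendsto (fun ω => m * (p * M) / ω) atTop (𝓝 0) :=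
    tendsto_const_nhds.div_atTop tendsto_id
  filter_upwards [hsmall.eventually (gt_mem_nhds (half_pos hε)), eventually_gt_atTop 0]
    with ω hωε hω t ht
  rw [Pi.zero_apply, dist_zero_left]
  -- cut `[0, t]` into `m` pieces of length `t / m < δ`; on each, `g s` is `η`-close to `g (a k)`
  set a : ℕ → ℝ := fun k => k * (t / m)
  have hgω : Continuous fun s => g s (ω * s) := hg.comp (continuous_id.prodMk (by fun_prop))
  have hpiece : ∀ k ∈ Finset.range m,
      ‖∫ s in a k..a (k + 1), g s (ω * s)‖ ≤ η * (t / m) + p * M / ω := by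
    intro k hk
    have hkm : (k : ℝ) + 1 ≤ m := by exact_mod_cast Finset.mem_range.mp hk
    have ht0 : 0 ≤ t / m := div_nonneg ht.1 hm0.le
    have hstep : a (k + 1) - a k = t / m := by simp only [a]; push_cast; ring
    have hend : a (k + 1) ≤ t := by
      calc a (k + 1) ≤ m * (t / m) := by simp only [a]; push_cast; gcongr
        _ = t := mul_div_cancel₀ _ hm0.ne'
    have hak : a k ∈ Icc 0 T := ⟨by positivity, by linarith [ht.2]⟩
    have hmesh : t / m < δ := by
      calc t / m ≤ L / m := by gcongr; exact ht.2.trans (le_max_left _ _)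
        _ < δ := (div_lt_iff₀ hm0).mpr (by rwa [div_lt_iff₀ hδ, mul_comm] at hm)
    rw [← hstep]
    refine norm_intervalIntegral_comp_mul_le_of_near_periodic (by linarith) hω hp hg (hper _)
      (hmean _) (hM _ hak) fun s hs τ => ?_
    rw [← dist_eq_norm]
    refine (hclose s ⟨hak.1.trans hs.1, by linarith [hs.2, ht.2]⟩ _ hak ?_ τ).le
    rw [Real.dist_eq, abs_of_nonneg (by linarith [hs.1])]
    linarith [hs.2]
  have hsum := sum_integral_adjacent_intervals (μ := MeasureTheory.volume) (a := a) (n := m)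
    (f := fun s => g s (ω * s)) fun k _ => hgω.intervalIntegrable _ _
  simp only [a, CharP.cast_eq_zero, zero_mul, mul_div_cancel₀ _ hm0.ne'] at hsum
  rw [← hsum]
  calc ‖∑ k ∈ Finset.range m, ∫ s in a k..a (k + 1), g s (ω * s)‖
      ≤ ∑ k ∈ Finset.range m, (η * (t / m) + p * M / ω) :=
        (norm_sum_le _ _).trans (Finset.sum_le_sum hpiece)
    _ = η * t + m * (p * M) / ω := by
        rw [Finset.sum_const, Finset.card_range, nsmul_eq_mul]; field_simp
    _ < ε := by
        have : η * t ≤ ε / 2 := by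
          calc η * t ≤ η * L := by gcongr; exact ht.2.trans (le_max_left _ _)
            _ = ε / 2 := by simp only [η]; field_simp
        linarith

theorem tendstoUniformlyOn_integral_sin_sub_mul_of_periodic {g : ℝ → ℝ → ℝ} (k : ℝ)
    (hp : 0 < p) (hg : Continuous (uncurry g)) (hper : ∀ s, Periodic (g s) p)
    (hmean : ∀ s, ∫ τ in 0..p, g s τ = 0) (T : ℝ) :
    TendstoUniformlyOn (fun ω t => ∫ s in 0..t, sin (k * (t - s)) / k * g s (ω * s)) 0 atTop
      (Icc 0 T) := by
  have hmodulated : ∀ q : ℝ → ℝ, Continuous q → ∀ ε > 0, ∀ᶠ ω in atTop, ∀ t ∈ Icc 0 T,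
      |∫ s in 0..t, q s * g s (ω * s)| < ε := fun q hq ε hε => by
    simpa only [Pi.zero_apply, dist_zero_left, Real.norm_eq_abs] using
      Metric.tendstoUniformlyOn_iff.mp (tendstoUniformlyOn_integral_comp_mul_of_periodic
        (g := fun s τ => q s * g s τ) hp ((hq.comp continuous_fst).mul hg)
        (fun s τ => by simp only [hper s τ]) (fun s => by simp only [integral_const_mul, hmean,
          mul_zero]) T) ε hε
  rw [Metric.tendstoUniformlyOn_iff]
  intro ε hε
  filter_upwards [hmodulated (fun s => cos (k * s) / k) (by fun_prop) _ (half_pos hε),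
    hmodulated (fun s => sin (k * s) / k) (by fun_prop) _ (half_pos hε)] with ω hcos hsin t ht
  have hgω : Continuous fun s => g s (ω * s) := hg.comp (continuous_id.prodMk (by fun_prop))
  have hexpand : ∫ s in 0..t, sin (k * (t - s)) / k * g s (ω * s)
      = sin (k * t) * (∫ s in 0..t, cos (k * s) / k * g s (ω * s))
        - cos (k * t) * ∫ s in 0..t, sin (k * s) / k * g s (ω * s) := by
    have hint : ∀ (c : ℝ) (q : ℝ → ℝ), Continuous q →
        IntervalIntegrable (fun s => c * (q s * g s (ω * s))) MeasureTheory.volume 0 t :=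
      fun c q hq => (continuous_const.mul (hq.mul hgω)).intervalIntegrable _ _
    rw [← integral_const_mul, ← integral_const_mul,
      ← integral_sub (hint _ (fun s => cos (k * s) / k) (by fun_prop))
        (hint _ (fun s => sin (k * s) / k) (by fun_prop))]
    congr 1 with s
    rw [mul_sub, sin_sub]
    ring
  rw [Pi.zero_apply, dist_zero_left, Real.norm_eq_abs, hexpand]
  calc _ ≤ |sin (k * t) * (∫ s in 0..t, cos (k * s) / k * g s (ω * s))|
        + |cos (k * t) * ∫ s in 0..t, sin (k * s) / k * g s (ω * s)| := abs_sub _ _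
    _ ≤ |∫ s in 0..t, cos (k * s) / k * g s (ω * s)|
        + |∫ s in 0..t, sin (k * s) / k * g s (ω * s)| := by
        rw [abs_mul, abs_mul]
        gcongr
        · exact mul_le_of_le_one_left (abs_nonneg _) (abs_sin_le_one _)
        · exact mul_le_of_le_one_left (abs_nonneg _) (abs_cos_le_one _)
    _ < ε := by linarith [hcos t ht, hsin t ht]

theorem tendstoUniformlyOn_integral_sin_sub_mul_add_sub_integral {r : ℝ → ℝ} {g : ℝ → ℝ → ℝ}
    (k : ℝ) (hp : 0 < p) {T : ℝ} (hr : ContinuousOn r (Icc 0 T)) (hg : Continuous (uncurry g))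
    (hper : ∀ s, Periodic (g s) p) (hmean : ∀ s, ∫ τ in 0..p, g s τ = 0) :
    TendstoUniformlyOn (fun ω t => (∫ s in 0..t, sin (k * (t - s)) / k * (r s + g s (ω * s)))
      - ∫ s in 0..t, sin (k * (t - s)) / k * r s) 0 atTop (Icc 0 T) := by
  refine (tendstoUniformlyOn_integral_sin_sub_mul_of_periodic k hp hg hper hmean T).congr
    (Eventually.of_forall fun ω t ht => ?_)
  have hkernel : Continuous fun s => sin (k * (t - s)) / k := by fun_prop
  have hsub : uIcc 0 t ⊆ Icc 0 T := by rw [uIcc_of_le ht.1]; exact Icc_subset_Icc_right ht.2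
  simp only [mul_add]
  rw [integral_add, add_sub_cancel_left]
  · exact (hkernel.continuousOn.mul (hr.mono hsub)).intervalIntegrable
  · exact (hkernel.mul (hg.comp (continuous_id.prodMk (by fun_prop)))).intervalIntegrable _ _

end Averaging

theorem stmt13_general (T : ℝ) (N : ℕ)
    (f : Fin N → ℝ) (r₀ : ℝ → ℝ) (hr₀ : ContinuousOn r₀ (Icc 0 T))
    (r₁ : ℝ → ℝ → ℝ) (hr₁ : Continuous (Function.uncurry r₁))
    (hper : ∀ t τ, r₁ t (τ + 2 * π) = r₁ t τ)
    (hmean : ∀ t, ∫ τ in (0:ℝ)..(2 * π), r₁ t τ = 0) :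
    ∀ ε > 0, ∃ ω₀ : ℝ, ∀ ω ≥ ω₀, ∀ x ∈ Icc (0:ℝ) π, ∀ t ∈ Icc (0:ℝ) T,
      |(∑ n : Fin N, f n * Real.sin ((n.val + 1) * x) *
          ∫ s in (0:ℝ)..t, Real.sin ((n.val + 1) * (t - s)) / (n.val + 1) *
            (r₀ s + r₁ s (ω * s)))
        - ∑ n : Fin N, f n * Real.sin ((n.val + 1) * x) *
          ∫ s in (0:ℝ)..t, Real.sin ((n.val + 1) * (t - s)) / (n.val + 1) * r₀ s| < ε := by
  intro ε hε
  set C := ∑ n, |f n| + 1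
  have hC : 0 < C := by positivity
  have hmodes := eventually_all.mpr fun n : Fin N =>
    Metric.tendstoUniformlyOn_iff.mp (tendstoUniformlyOn_integral_sin_sub_mul_add_sub_integral
      ((n.val : ℝ) + 1) two_pi_pos hr₀ hr₁ hper hmean) _ (div_pos hε hC)
  obtain ⟨ω₀, hω₀⟩ := eventually_atTop.mp hmodes
  refine ⟨ω₀, fun ω hω x _ t ht => ?_⟩
  rw [← Finset.sum_sub_distrib]
  simp_rw [← mul_sub]
  calc _ ≤ ∑ n : Fin N, |f n| * (ε / C) := by
        refine (Finset.abs_sum_le_sum_abs _ _).trans (Finset.sum_le_sum fun n _ => ?_)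
        have hmode := hω₀ ω hω n t ht
        rw [Pi.zero_apply, dist_zero_left, Real.norm_eq_abs] at hmode
        rw [abs_mul, abs_mul]
        exact mul_le_mul (mul_le_of_le_one_right (abs_nonneg _) (abs_sin_le_one _)) hmode.le
          (abs_nonneg _) (abs_nonneg _)
    _ < C * (ε / C) := by
        rw [← Finset.sum_mul]
        exact mul_lt_mul_of_pos_right (lt_add_one _) (div_pos hε hC)
    _ = ε := mul_div_cancel₀ _ hC.ne'

theorem stmt13 (T : ℝ) (hT : 0 < T) (N : ℕ) (hN : 1 ≤ N)
    (f : Fin N → ℝ) (r₀ : ℝ → ℝ) (hr₀ : ContinuousOn r₀ (Icc 0 T))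
    (r₁ : ℝ → ℝ → ℝ) (hr₁ : Continuous (Function.uncurry r₁))
    (hper : ∀ t τ, r₁ t (τ + 2 * π) = r₁ t τ)
    (hmean : ∀ t, ∫ τ in (0:ℝ)..(2 * π), r₁ t τ = 0) :
    ∀ ε > 0, ∃ ω₀ : ℝ, ∀ ω ≥ ω₀, ∀ x ∈ Icc (0:ℝ) π, ∀ t ∈ Icc (0:ℝ) T,
      |(∑ n : Fin N, f n * Real.sin ((n.val + 1) * x) *
          ∫ s in (0:ℝ)..t, Real.sin ((n.val + 1) * (t - s)) / (n.val + 1) *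
            (r₀ s + r₁ s (ω * s)))
        - ∑ n : Fin N, f n * Real.sin ((n.val + 1) * x) *
          ∫ s in (0:ℝ)..t, Real.sin ((n.val + 1) * (t - s)) / (n.val + 1) * r₀ s| < ε :=
  stmt13_general T N f r₀ hr₀ r₁ hr₁ hper hmean
end
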